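/- In the setting of the cone lemma (Γ = 0 * Δ, embeddings p and p' as above), the linear map λ(x_0,x_1,…,x_n) ↦ λ_0(a_1 x_1,…,a_n x_n) from Stress_k(Γ,p) to Stress_k(Δ,p') is a linear isomorphism. In particular, every affine k-stress ω' on (Δ,p') lifts to an affine k-stress ω on (Γ,p) with ω'_F = (Π_{i∈F} a_i) ω_F for every (k−1)-dimensional face F of Δ. -/

import Mathlib

/-! Write `a_i` for the last coordinate of `p(i)`. The substitution `x₀ ↦ 0, x_i ↦ a_i x_i` has
the explicit inverse `w ↦ w((x_1 - x₀)/a_1, …, (x_n - x₀)/a_n)` on stresses of the cone: their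
composite is the translation `x_v ↦ x_v - x₀`, and a polynomial annihilated by `∑_v ∂/∂x_v`
is invariant under it, since `t ↦ λ(x - t x₀ 𝟙)` has zero derivative. By the chain rule both
substitutions carry the differential operators of `(Γ, p)` to those of `(Δ, p')` and back, and
they preserve degrees and face supports, so they restrict to inverse bijections of the stress
spaces. -/

open scoped Classical

noncomputable section

/-- The differential operator `∂_ℓ` associated to a linear form with coefficients `l`. -/
def Dop {W : Type} [Fintype W] (l : W → ℝ) (q : MvPolynomial W ℝ) : MvPolynomial W ℝ :=
  ∑ w : W, l w • MvPolynomial.pderiv w q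

/-- An affine `k`-stress on a simplicial complex with face set `faces` and embedding `q`
into `ℝ^D`: a homogeneous degree-`k` polynomial supported on faces and annihilated by the
`D` coordinate differential operators and the all-ones operator. -/
def IsStressOn {W : Type} [Fintype W] {D : ℕ} (faces : Set (Finset W))
    (q : W → Fin D → ℝ) (k : ℕ) (lam : MvPolynomial W ℝ) : Prop :=
  lam.IsHomogeneous k ∧
  (∀ m ∈ lam.support, m.support ∈ faces) ∧
  (∀ i : Fin D, Dop (fun w => q w i) lam = 0) ∧
  Dop (fun _ => (1 : ℝ)) lam = 0

/-- The cone `0 * Δ` over a complex `Δ` on `[n]`, with apex `none`. -/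
def coneComplex {n : ℕ} (Δ : Set (Finset (Fin n))) : Set (Finset (Option (Fin n))) :=
  {F | F.eraseNone ∈ Δ}

/-- Substituting `x₀ ↦ 0` and `x_i ↦ a_i x_i`; on `λ = ∑_j x₀^j λ_j` this produces
`λ₀(a_1 x_1, …, a_n x_n)`. -/
def coneSubst {n : ℕ} (a : Fin n → ℝ) :
    MvPolynomial (Option (Fin n)) ℝ →ₐ[ℝ] MvPolynomial (Fin n) ℝ :=
  MvPolynomial.aeval (fun w : Option (Fin n) =>
    w.elim 0 (fun i => MvPolynomial.C (a i) * MvPolynomial.X i))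

/-- The exponent vector of the squarefree monomial `∏_{v ∈ G} x_v`. -/
def sqFree {W : Type} (G : Finset W) : W →₀ ℕ :=
  ∑ v ∈ G, Finsupp.single v 1

open MvPolynomial

section Translation

variable {W : Type}

def translateAlong (c : W → ℝ) : MvPolynomial W ℝ →ₐ[ℝ] Polynomial (MvPolynomial W ℝ) :=
  aeval fun w => Polynomial.C (X w) + Polynomial.C (C (c w)) * Polynomial.X

theorem eval_translateAlong (c : W → ℝ) (g f : MvPolynomial W ℝ) :
    (translateAlong c f).eval g = aeval (fun w => X w + C (c w) * g) f := by
  simp only [translateAlong]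
  induction f using MvPolynomial.induction_on with
  | C r => simp [Polynomial.algebraMap_apply, algebraMap_eq]
  | add f₁ f₂ h₁ h₂ => rw [map_add, Polynomial.eval_add, h₁, h₂, map_add]
  | mul_X f v hf => simp [hf]

end Translation

section Dop

variable {V W : Type} [Fintype V] [Fintype W]

theorem Dop_C (l : W → ℝ) (r : ℝ) : Dop l (C r) = 0 := by
  simp [Dop]

theorem Dop_X (l : W → ℝ) (w : W) : Dop l (X w) = C (l w) := by
  simp [Dop, pderiv_X, Pi.single_apply, smul_eq_C_mul]

theorem Dop_add (l : W → ℝ) (f g : MvPolynomial W ℝ) : Dop l (f + g) = Dop l f + Dop l g := by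
  simp [Dop, Finset.sum_add_distrib]

theorem Dop_sub (l : W → ℝ) (f g : MvPolynomial W ℝ) : Dop l (f - g) = Dop l f - Dop l g := by
  simp [Dop, smul_sub, Finset.sum_sub_distrib]

theorem Dop_mul (l : W → ℝ) (f g : MvPolynomial W ℝ) :
    Dop l (f * g) = Dop l f * g + f * Dop l g := by
  simp only [Dop, pderiv_mul, smul_add, Finset.sum_add_distrib, Finset.sum_mul, Finset.mul_sum,
    smul_mul_assoc, mul_smul_comm]

theorem Dop_C_mul (l : W → ℝ) (r : ℝ) (f : MvPolynomial W ℝ) :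
    Dop l (C r * f) = C r * Dop l f := by
  rw [Dop_mul, Dop_C, zero_mul, zero_add]

theorem Dop_zero (f : MvPolynomial W ℝ) : Dop 0 f = 0 := by
  simp [Dop]

theorem Dop_aeval (g : V → MvPolynomial W ℝ) (l : W → ℝ) (c : V → ℝ)
    (hg : ∀ v, Dop l (g v) = C (c v)) (f : MvPolynomial V ℝ) :
    Dop l (aeval g f) = aeval g (Dop c f) := by
  induction f using MvPolynomial.induction_on with
  | C r => simp [Dop_C, algebraMap_eq]
  | add f₁ f₂ h₁ h₂ => rw [map_add, Dop_add, h₁, h₂, Dop_add, map_add]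
  | mul_X f v hf =>
    rw [map_mul, aeval_X, Dop_mul, hf, hg v, Dop_mul, Dop_X, map_add, map_mul, map_mul, aeval_X,
      aeval_C, algebraMap_eq]

theorem derivative_translateAlong (c : W → ℝ) (f : MvPolynomial W ℝ) :
    Polynomial.derivative (translateAlong c f) = translateAlong c (Dop c f) := by
  induction f using MvPolynomial.induction_on with
  | C r => simp [translateAlong, Dop_C, Polynomial.algebraMap_apply, algebraMap_eq]
  | add f₁ f₂ h₁ h₂ => rw [map_add, map_add, h₁, h₂, Dop_add, map_add]
  | mul_X f v hf =>
    simp only [translateAlong] at hf ⊢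
    rw [map_mul, aeval_X, Polynomial.derivative_mul, hf, Dop_mul, Dop_X]
    simp only [Polynomial.derivative_mul, Polynomial.derivative_C,
      Polynomial.derivative_X, map_add, map_mul, aeval_X, aeval_C, Polynomial.algebraMap_apply,
      algebraMap_eq]
    ring

theorem aeval_add_C_mul_eq_self_of_Dop_eq_zero (c : W → ℝ) (g : MvPolynomial W ℝ)
    {f : MvPolynomial W ℝ} (hf : Dop c f = 0) : aeval (fun w => X w + C (c w) * g) f = f := by
  have hconst := Polynomial.eq_C_of_derivative_eq_zero
    (by rw [derivative_translateAlong, hf, map_zero] : (translateAlong c f).derivative = 0)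
  calc aeval (fun w => X w + C (c w) * g) f = (translateAlong c f).eval g :=
        (eval_translateAlong c g f).symm
    _ = (translateAlong c f).eval 0 := by rw [hconst, Polynomial.eval_C, Polynomial.eval_C]
    _ = f := by simp [eval_translateAlong]

end Dop

theorem exists_support_subset_of_mem_support_aeval {V W : Type} [DecidableEq W]
    (g : V → MvPolynomial W ℝ) {f : MvPolynomial V ℝ} {e : W →₀ ℕ} (he : e ∈ (aeval g f).support) :
    ∃ d ∈ f.support, e.support ⊆ d.support.biUnion fun v => (g v).vars := by
  rw [f.as_sum, map_sum] at he
  obtain ⟨d, hd, hed⟩ := Finset.mem_biUnion.1 (support_sum he)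
  refine ⟨d, hd, fun x hx => ?_⟩
  have hx' : x ∈ (bind₁ g (monomial d (coeff d f))).vars := by
    rw [← aeval_eq_bind₁]
    exact (mem_vars_iff_mem_support x).2 ⟨e, hed, hx⟩
  simpa [vars_monomial (mem_support_iff.1 hd)] using vars_bind₁ _ _ hx'

theorem vars_C_mul_X_sub_X_subset {σ : Type} [DecidableEq σ] (r : ℝ) (v w : σ) :
    (C r * (X v - X w) : MvPolynomial σ ℝ).vars ⊆ {v, w} := by
  refine (vars_mul _ _).trans ?_
  rw [vars_C, Finset.empty_union]
  refine (vars_sub_subset _).trans ?_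
  rw [vars_X, vars_X, Finset.insert_eq]

theorem Finsupp.eraseNone_support_optionElim {α M : Type} [Zero M] (y : M) (f : α →₀ M) :
    (f.optionElim y).support.eraseNone = f.support := by
  ext i
  simp

section sqFree

variable {W : Type}

theorem sqFree_apply [DecidableEq W] (G : Finset W) (v : W) :
    sqFree G v = if v ∈ G then 1 else 0 := by
  simp [sqFree, Finsupp.finsetSum_apply, Finsupp.single_apply]

theorem prod_pow_sqFree (G : Finset W) (a : W → ℝ) :
    (sqFree G).prod (fun v e => a v ^ e) = ∏ v ∈ G, a v := by
  rw [sqFree, ← Finsupp.prod_finsetSum_index (h := fun v e => a v ^ e) (fun _ => pow_zero _)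
    (fun _ _ _ => pow_add _ _ _)]
  simp

theorem optionElim_sqFree [DecidableEq W] (G : Finset W) :
    (sqFree G).optionElim 0 = sqFree (G.image some) := by
  ext (_ | v) <;> simp [sqFree_apply]

end sqFree

section Cone

variable {n : ℕ}

theorem coneSubst_monomial (a : Fin n → ℝ) (d : Option (Fin n) →₀ ℕ) (r : ℝ) :
    coneSubst a (monomial d r) =
      if d none = 0 then monomial d.some (r * d.some.prod fun i e => a i ^ e) else 0 := by
  rw [coneSubst, aeval_monomial,
    Finsupp.prod_option_index _ _ (fun _ => pow_zero _) (fun _ _ _ => pow_add _ _ _)]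
  split_ifs with hd
  · simp only [hd, Option.elim, pow_zero, one_mul, mul_pow, algebraMap_eq, monomial_eq, map_mul,
      Finsupp.prod, map_prod, map_pow]
    rw [Finset.prod_mul_distrib, mul_assoc]
  · simp [zero_pow hd]

theorem coeff_coneSubst (a : Fin n → ℝ) (lam : MvPolynomial (Option (Fin n)) ℝ)
    (e : Fin n →₀ ℕ) :
    (coneSubst a lam).coeff e = (e.prod fun i k => a i ^ k) * lam.coeff (e.optionElim 0) := by
  induction lam using MvPolynomial.induction_on' with
  | add f g hf hg => rw [map_add, coeff_add, coeff_add, hf, hg, mul_add]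
  | monomial d r =>
    rw [coneSubst_monomial, coeff_monomial]
    by_cases hd : d = e.optionElim 0
    · subst hd
      simp [mul_comm]
    · rw [if_neg hd, mul_zero]
      split_ifs with h₀
      · rw [coeff_monomial, if_neg]
        rintro rfl
        exact hd (by rw [← h₀, Finsupp.optionElim_some])
      · exact coeff_zero e

theorem coeff_sqFree_coneSubst (a : Fin n → ℝ) (lam : MvPolynomial (Option (Fin n)) ℝ)
    (F : Finset (Fin n)) :
    (coneSubst a lam).coeff (sqFree F) = (∏ i ∈ F, a i) * lam.coeff (sqFree (F.image some)) := by
  rw [coeff_coneSubst, prod_pow_sqFree, optionElim_sqFree]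

def coneLift (a : Fin n → ℝ) : MvPolynomial (Fin n) ℝ →ₐ[ℝ] MvPolynomial (Option (Fin n)) ℝ :=
  aeval fun i => C (a i)⁻¹ * (X (some i) - X none)

variable {a : Fin n → ℝ}

theorem coneSubst_coneLift (ha : ∀ i, a i ≠ 0) (w : MvPolynomial (Fin n) ℝ) :
    coneSubst a (coneLift a w) = w := by
  have hcomp : (coneSubst a).comp (coneLift a) = AlgHom.id ℝ _ := by
    ext i
    simp [coneLift, coneSubst, algebraMap_eq, ← mul_assoc, ← C_mul, ha i]
  simpa using DFunLike.congr_fun hcomp w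

theorem coneLift_coneSubst (ha : ∀ i, a i ≠ 0) {lam : MvPolynomial (Option (Fin n)) ℝ}
    (hlam : Dop 1 lam = 0) : coneLift a (coneSubst a lam) = lam := by
  have hcomp : (coneLift a).comp (coneSubst a) =
      aeval fun v => X v + C ((1 : Option (Fin n) → ℝ) v) * -X none := by
    ext (_ | i)
    · simp [coneSubst, coneLift]
    · simp [coneSubst, coneLift, algebraMap_eq, ← mul_assoc, ← C_mul, ha i, sub_eq_add_neg]
  rw [← AlgHom.comp_apply, hcomp, aeval_add_C_mul_eq_self_of_Dop_eq_zero _ _ hlam]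

theorem MvPolynomial.IsHomogeneous.coneSubst {k : ℕ} {lam : MvPolynomial (Option (Fin n)) ℝ}
    (h : lam.IsHomogeneous k) : (coneSubst a lam).IsHomogeneous k := by
  have := h.aeval (n := 1) (fun v => v.elim 0 fun i => C (a i) * X i) fun v => by
    cases v with
    | none => exact isHomogeneous_zero _ _ _
    | some i => exact isHomogeneous_C_mul_X (a i) i
  rwa [one_mul] at this

theorem MvPolynomial.IsHomogeneous.coneLift {k : ℕ} {w : MvPolynomial (Fin n) ℝ}
    (h : w.IsHomogeneous k) : (coneLift a w).IsHomogeneous k := by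
  have := h.aeval _ fun i =>
    ((isHomogeneous_X ℝ (some i)).sub (isHomogeneous_X ℝ none)).C_mul (a i)⁻¹
  rwa [one_mul] at this

theorem Dop_coneSubst (l : Fin n → ℝ) (lam : MvPolynomial (Option (Fin n)) ℝ) :
    Dop l (coneSubst a lam) = coneSubst a (Dop (fun v => v.elim 0 fun i => a i * l i) lam) :=
  Dop_aeval _ _ _ (fun v => by
    cases v with
    | none => simp [Dop]
    | some i => rw [Option.elim, Option.elim, Dop_C_mul, Dop_X, ← C_mul]) lam

theorem Dop_coneLift (l : Option (Fin n) → ℝ) (w : MvPolynomial (Fin n) ℝ) :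
    Dop l (coneLift a w) = coneLift a (Dop (fun i => (a i)⁻¹ * (l (some i) - l none)) w) :=
  Dop_aeval _ _ _ (fun i => by rw [Dop_C_mul, Dop_sub, Dop_X, Dop_X, ← C_sub, ← C_mul]) w

variable {m : ℕ}

-- `a_i` and `p'(i) = v_i / a_i` in the notation of the cone lemma.
def coneHeight (p : Option (Fin n) → Fin (m + 1) → ℝ) (i : Fin n) : ℝ :=
  p (some i) (Fin.last m)

def coneProjection (p : Option (Fin n) → Fin (m + 1) → ℝ) (i : Fin n) (j : Fin m) : ℝ :=
  p (some i) j.castSucc / coneHeight p i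

variable {Δ : Set (Finset (Fin n))} {p : Option (Fin n) → Fin (m + 1) → ℝ} {k : ℕ}

theorem IsStressOn.coneSubst (hp0 : p none = 0) (ha : ∀ i, coneHeight p i ≠ 0)
    {lam : MvPolynomial (Option (Fin n)) ℝ} (hlam : IsStressOn (coneComplex Δ) p k lam) :
    IsStressOn Δ (coneProjection p) k (coneSubst (coneHeight p) lam) := by
  obtain ⟨hhom, hsupp, hcoord, hones⟩ := hlam
  refine ⟨hhom.coneSubst, fun e he => ?_, fun j => ?_, ?_⟩
  · rw [mem_support_iff, coeff_coneSubst] at he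
    have := hsupp _ (mem_support_iff.2 (right_ne_zero_of_mul he))
    rwa [coneComplex, Set.mem_ofPred_eq, Finsupp.eraseNone_support_optionElim] at this
  · have hcoeff : (fun v => v.elim 0 fun i => coneHeight p i * coneProjection p i j) =
        fun v => p v j.castSucc := by
      funext v
      cases v with
      | none => simp [hp0]
      | some i => exact mul_div_cancel₀ _ (ha i)
    rw [Dop_coneSubst, hcoeff, hcoord, map_zero]
  · have hcoeff : (fun v => v.elim 0 fun i => coneHeight p i * 1) = fun v => p v (Fin.last m) := by
      funext v
      cases v with
      | none => simp [hp0]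
      | some i => exact mul_one _
    rw [Dop_coneSubst, hcoeff, hcoord, map_zero]

theorem IsStressOn.coneLift (hΔ : ∀ F ∈ Δ, ∀ G ⊆ F, G ∈ Δ) (hp0 : p none = 0)
    (ha : ∀ i, coneHeight p i ≠ 0) {w : MvPolynomial (Fin n) ℝ}
    (hw : IsStressOn Δ (coneProjection p) k w) :
    IsStressOn (coneComplex Δ) p k (coneLift (coneHeight p) w) := by
  obtain ⟨hhom, hsupp, hcoord, hones⟩ := hw
  refine ⟨hhom.coneLift, fun e he => ?_, fun j => ?_, ?_⟩
  · obtain ⟨d, hd, hsub⟩ := exists_support_subset_of_mem_support_aeval _ he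
    refine hΔ _ (hsupp d hd) _ fun i hi => ?_
    obtain ⟨j, hj, hij⟩ := Finset.mem_biUnion.1 (hsub (Finset.mem_eraseNone.1 hi))
    have hij' := vars_C_mul_X_sub_X_subset _ _ _ hij
    simp only [Finset.mem_insert, Finset.mem_singleton, reduceCtorEq, or_false,
      Option.some_inj] at hij'
    rw [hij']
    exact hj
  · rw [Dop_coneLift]
    cases j using Fin.lastCases with
    | last =>
      have hcoeff : (fun i => (coneHeight p i)⁻¹ *
          (p (some i) (Fin.last m) - p none (Fin.last m))) = fun _ => 1 := by
        funext i
        rw [hp0, Pi.zero_apply, sub_zero]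
        exact inv_mul_cancel₀ (ha i)
      rw [hcoeff, hones, map_zero]
    | cast j =>
      have hcoeff : (fun i => (coneHeight p i)⁻¹ *
          (p (some i) j.castSucc - p none j.castSucc)) = fun i => coneProjection p i j := by
        funext i
        rw [hp0, Pi.zero_apply, sub_zero, coneProjection, inv_mul_eq_div]
      rw [hcoeff, hcoord, map_zero]
  · simp [Dop_coneLift, ← Pi.zero_def, Dop_zero]

end Cone

/-- Cone Lemma, second part: in the setting of the cone lemma, the linear
map `λ ↦ λ₀(a_1 x_1, …, a_n x_n)` is a bijection from `Stress_k(Γ, p)` onto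
`Stress_k(Δ, p')`; in particular every `k`-stress `ω'` on `(Δ, p')` lifts to a `k`-stress
`ω` on `(Γ, p)` with `ω'_F = (∏_{i ∈ F} a_i) ω_F` for every `(k−1)`-dimensional face `F`
of `Δ`. -/
theorem stmt11 {n m k : ℕ} (Δ : Set (Finset (Fin n)))
    (hΔ : ∀ F ∈ Δ, ∀ G ⊆ F, G ∈ Δ)
    (p : Option (Fin n) → Fin (m + 1) → ℝ)
    (hp0 : p none = 0)
    (ha : ∀ i : Fin n, p (some i) (Fin.last m) ≠ 0) :
    Set.BijOn (coneSubst (fun i => p (some i) (Fin.last m)))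
      {lam : MvPolynomial (Option (Fin n)) ℝ | IsStressOn (coneComplex Δ) p k lam}
      {w : MvPolynomial (Fin n) ℝ |
        IsStressOn Δ (fun i j => p (some i) j.castSucc / p (some i) (Fin.last m)) k w} ∧
    ∀ w : MvPolynomial (Fin n) ℝ,
      IsStressOn Δ (fun i j => p (some i) j.castSucc / p (some i) (Fin.last m)) k w →
      ∃ ω : MvPolynomial (Option (Fin n)) ℝ,
        IsStressOn (coneComplex Δ) p k ω ∧
        coneSubst (fun i => p (some i) (Fin.last m)) ω = w ∧
        ∀ F : Finset (Fin n), F ∈ Δ → F.card = k →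
          w.coeff (sqFree F) =
            (∏ i ∈ F, p (some i) (Fin.last m)) * ω.coeff (sqFree (F.image some)) := by
  have hinv : Set.InvOn (coneLift (coneHeight p)) (coneSubst (coneHeight p))
      {lam | IsStressOn (coneComplex Δ) p k lam} {w | IsStressOn Δ (coneProjection p) k w} :=
    ⟨fun lam hlam => coneLift_coneSubst ha hlam.2.2.2, fun w _ => coneSubst_coneLift ha w⟩
  refine ⟨hinv.bijOn (fun lam hlam => hlam.coneSubst hp0 ha) fun w hw => hw.coneLift hΔ hp0 ha,
    fun w hw => ⟨coneLift (coneHeight p) w, hw.coneLift hΔ hp0 ha, coneSubst_coneLift ha w,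
      fun F _ _ => ?_⟩⟩
  have hcoeff := coeff_sqFree_coneSubst (coneHeight p) (coneLift (coneHeight p) w) F
  rwa [coneSubst_coneLift (a := coneHeight p) ha] at hcoeff

end
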